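/- arXiv:2405.06349 — 3 statements merged into one kernel-verified Lean document; each statement's English description precedes it below -/
import Mathlib

section
/- Define V(x) = x·(H(x) − log x − γ + 2) − (1/2)·log x + ∑_{n=1}^{⌊x⌋} log n − ⌊x⌋·(1 + log x) − (1/2)·log(2π) − 1/2 for x > 0. Then for every x > 0 one has V(x) = ∫_{x}^{∞} R₁(t) dt, and for every r > 0 one has ∫_{r}^{∞} S₁(t) dt = ∑_{n=1}^{∞} V(nr)/n. -/
open Real MeasureTheory Filter Topology

/-- Harmonic sum `H(x) = ∑_{k=1}^{⌊x⌋} 1/k`. -/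
noncomputable def H (x : ℝ) : ℝ := ∑ k ∈ Finset.Icc 1 ⌊x⌋₊, (1 : ℝ) / k

/-- `R₁(x) = log x + γ − H(x) − ({x} − 1/2)/x`. -/
noncomputable def R1 (x : ℝ) : ℝ :=
  Real.log x + Real.eulerMascheroniConstant - H x - (Int.fract x - 1/2) / x

/-- `S₁(x) = ∑_{k≥1} R₁(kx)`. -/
noncomputable def S1 (x : ℝ) : ℝ := ∑' k : ℕ, R1 ((k + 1) * x)

/-- `V(x) = x(H(x) − log x − γ + 2) − ½ log x + ∑_{n≤x} log n − ⌊x⌋(1 + log x) − ½ log 2π − ½`. -/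
noncomputable def V (x : ℝ) : ℝ :=
  x * (H x - Real.log x - Real.eulerMascheroniConstant + 2) - (1/2) * Real.log x
    + (∑ n ∈ Finset.Icc 1 ⌊x⌋₊, Real.log n) - (⌊x⌋₊ : ℝ) * (1 + Real.log x)
    - (1/2) * Real.log (2 * Real.pi) - 1/2

/-!
On each cell `[m, m + 1]` the functions `R1` and `V` coincide with smooth closed forms satisfying
`V' = -R1`, and the closed forms of adjacent cells agree at the common integer endpoint, so
`∫_x^N R1 = V x - V N` for every integer `N ≥ x`. At an integer,
`V N = log (stirlingSeq N) - log π / 2 - N R1(N)`, and `R1 N = O(1/N²)` because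
`R1 N - R1 (N + 1)` is the trapezoid-rule error of `∫ dt/t` over `[N, N + 1]`; so `V N → 0` by
Stirling's formula, which gives the first identity. The bound `|R1 u| ≤ 5/u²` makes
`∑ₖ ∫_r^∞ |R1 (k t)| dt` finite, so the second identity follows by integrating `S1` termwise and
substituting `u = k t` in each term.
-/

open Set

noncomputable def R1Piece (m : ℕ) (t : ℝ) : ℝ :=
  log t + eulerMascheroniConstant - harmonic m - 1 + (m + 1 / 2) / t

noncomputable def VPiece (m : ℕ) (t : ℝ) : ℝ :=
  t * (harmonic m - log t - eulerMascheroniConstant + 2) - (1 / 2) * log t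
    + (∑ n ∈ Finset.Icc 1 m, log n) - m * (1 + log t) - (1 / 2) * log (2 * π) - 1 / 2

lemma H_eq_harmonic (x : ℝ) : H x = harmonic ⌊x⌋₊ := by
  simp [H, harmonic_eq_sum_Icc]

lemma R1_eq_R1Piece_floor {x : ℝ} (hx : 0 < x) : R1 x = R1Piece ⌊x⌋₊ x := by
  rw [R1, R1Piece, H_eq_harmonic, Int.fract, ← natCast_floor_eq_intCast_floor hx.le]
  field_simp
  ring

lemma V_eq_VPiece_floor (x : ℝ) : V x = VPiece ⌊x⌋₊ x := by
  rw [V, VPiece, H_eq_harmonic]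

lemma R1Piece_succ_self (m : ℕ) : R1Piece (m + 1) (m + 1) = R1Piece m (m + 1) := by
  simp only [R1Piece, harmonic_succ]
  push_cast
  field_simp
  ring

lemma VPiece_succ_self (m : ℕ) : VPiece (m + 1) (m + 1) = VPiece m (m + 1) := by
  simp only [VPiece, harmonic_succ, Finset.sum_Icc_succ_top (Nat.le_add_left 1 m)]
  push_cast
  field_simp
  ring

lemma eq_piece_of_mem_Icc {α : Type*} {f : ℝ → α} {F : ℕ → ℝ → α}
    (hf : ∀ x, 0 < x → f x = F ⌊x⌋₊ x) (hF : ∀ m : ℕ, F (m + 1) (m + 1) = F m (m + 1))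
    {m : ℕ} {t : ℝ} (ht : 0 < t) (htm : t ∈ Icc (m : ℝ) (m + 1)) : f t = F m t := by
  rcases htm.2.eq_or_lt with rfl | hlt
  · rw [hf _ ht, ← hF, ← Nat.cast_add_one, Nat.floor_natCast]
  · rw [hf t ht, (Nat.floor_eq_iff ht.le).2 ⟨htm.1, hlt⟩]

lemma R1_eq_R1Piece {m : ℕ} {t : ℝ} (ht : 0 < t) (htm : t ∈ Icc (m : ℝ) (m + 1)) :
    R1 t = R1Piece m t :=
  eq_piece_of_mem_Icc (fun _ hx => R1_eq_R1Piece_floor hx) R1Piece_succ_self ht htm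

lemma V_eq_VPiece {m : ℕ} {t : ℝ} (ht : 0 < t) (htm : t ∈ Icc (m : ℝ) (m + 1)) :
    V t = VPiece m t :=
  eq_piece_of_mem_Icc (fun x _ => V_eq_VPiece_floor x) VPiece_succ_self ht htm

lemma hasDerivAt_R1Piece (m : ℕ) {t : ℝ} (ht : 0 < t) :
    HasDerivAt (R1Piece m) ((t - (m + 1 / 2)) / t ^ 2) t := by
  have h := ((((hasDerivAt_log ht.ne').add_const eulerMascheroniConstant).sub_const
    (harmonic m : ℝ)).sub_const 1).add ((hasDerivAt_inv ht.ne').const_mul ((m : ℝ) + 1 / 2))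
  exact h.congr_deriv (by field_simp; ring)

lemma hasDerivAt_VPiece (m : ℕ) {t : ℝ} (ht : 0 < t) :
    HasDerivAt (VPiece m) (-R1Piece m t) t := by
  have hlog := hasDerivAt_log ht.ne'
  have h := ((((hasDerivAt_id' t).mul ((((hlog.const_sub (harmonic m : ℝ)).sub_const
    eulerMascheroniConstant).add_const 2))).sub (hlog.const_mul (1 / 2))).add_const
    (∑ n ∈ Finset.Icc 1 m, log n)).sub ((hlog.const_add 1).const_mul (m : ℝ))
    |>.sub_const ((1 / 2) * log (2 * π)) |>.sub_const (1 / 2)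
  exact h.congr_deriv (by rw [R1Piece]; field_simp; ring)

lemma abs_trapezoid_inv_le {x : ℝ} (hx : 0 < x) :
    |1 / (2 * x) + 1 / (2 * (x + 1)) - (log (x + 1) - log x)| ≤
      3 / 4 * (1 / x ^ 2 - 1 / (x + 1) ^ 2) := by
  have hx0 : x ≠ 0 := hx.ne'
  have hx1 : x + 1 ≠ 0 := by positivity
  have hy : |1 / (x + 1)| < 1 := by
    rw [abs_of_pos (by positivity), div_lt_one (by positivity)]
    linarith
  have hlog : log (1 - 1 / (x + 1)) = log x - log (x + 1) := by
    rw [← log_div hx0 hx1]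
    congr 1
    field_simp
    ring
  have htaylor : |1 / (x + 1) + 1 / (2 * (x + 1) ^ 2) - (log (x + 1) - log x)| ≤
      1 / (x * (x + 1) ^ 2) := by
    convert abs_log_sub_add_sum_range_le hy 2 using 1
    · congr 1
      simp only [Finset.sum_range_succ, Finset.sum_range_zero, hlog, Nat.cast_zero,
        Nat.cast_one, one_div_pow]
      field_simp
      ring
    · rw [abs_of_pos (by positivity), show 1 - 1 / (x + 1) = x / (x + 1) by field_simp; ring,
        one_div_pow]
      field_simp
  have hsplit : 1 / (2 * x) + 1 / (2 * (x + 1)) - (log (x + 1) - log x) =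
      (1 / (x + 1) + 1 / (2 * (x + 1) ^ 2) - (log (x + 1) - log x))
        + 1 / (2 * x * (x + 1) ^ 2) := by
    field_simp
    ring
  have htotal : 3 / 4 * (1 / x ^ 2 - 1 / (x + 1) ^ 2) =
      1 / (x * (x + 1) ^ 2) + 1 / (2 * x * (x + 1) ^ 2) + 3 / (4 * x ^ 2 * (x + 1) ^ 2) := by
    field_simp
    ring
  rw [hsplit, htotal]
  refine (abs_add_le _ _).trans ?_
  rw [abs_of_pos (by positivity : (0 : ℝ) < 1 / (2 * x * (x + 1) ^ 2))]
  have : (0 : ℝ) ≤ 3 / (4 * x ^ 2 * (x + 1) ^ 2) := by positivity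
  linarith

lemma abs_le_of_abs_sub_succ_le {u b : ℕ → ℝ} (hu : Tendsto u atTop (𝓝 0))
    (hb : Tendsto b atTop (𝓝 0)) (h : ∀ n, |u n - u (n + 1)| ≤ b n - b (n + 1)) (n : ℕ) :
    |u n| ≤ b n := by
  have hmono : Monotone (fun n => u n - b n) :=
    monotone_nat_of_le_succ fun n => by linarith [(abs_le.1 (h n)).2]
  have hanti : Antitone (fun n => u n + b n) :=
    antitone_nat_of_succ_le fun n => by linarith [(abs_le.1 (h n)).1]
  have hle := hmono.ge_of_tendsto (by simpa using hu.sub hb) n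
  have hge := hanti.le_of_tendsto (by simpa using hu.add hb) n
  exact abs_le.2 ⟨by linarith, by linarith⟩

lemma R1_natCast {N : ℕ} (hN : 0 < N) :
    R1 N = log N + eulerMascheroniConstant - harmonic N + 1 / (2 * N) := by
  rw [R1_eq_R1Piece_floor (by positivity), Nat.floor_natCast, R1Piece]
  field_simp
  ring

lemma tendsto_R1_natCast : Tendsto (fun N : ℕ => R1 N) atTop (𝓝 0) := by
  have h := (tendsto_harmonic_sub_log.const_sub eulerMascheroniConstant).add
    (tendsto_const_div_atTop_nhds_zero_nat (1 / 2 : ℝ))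
  rw [sub_self, add_zero] at h
  refine h.congr' ?_
  filter_upwards [eventually_gt_atTop 0] with N hN
  rw [R1_natCast hN]
  ring

lemma abs_R1_natCast_le {N : ℕ} (hN : 0 < N) : |R1 N| ≤ 3 / (4 * N ^ 2) := by
  obtain ⟨n, rfl⟩ : ∃ n, N = n + 1 := ⟨N - 1, by omega⟩
  have hb : Tendsto (fun n : ℕ => 3 / (4 * ((n + 1 : ℕ) : ℝ) ^ 2)) atTop (𝓝 0) := by
    have h := (tendsto_one_div_add_atTop_nhds_zero_nat.pow 2).const_mul (3 / 4 : ℝ)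
    rw [zero_pow two_ne_zero, mul_zero] at h
    refine h.congr fun n => ?_
    push_cast
    field_simp
  refine abs_le_of_abs_sub_succ_le (u := fun n => R1 (n + 1 : ℕ))
    (tendsto_R1_natCast.comp (tendsto_add_atTop_nat 1)) hb (fun n => ?_) n
  have h := abs_trapezoid_inv_le (x := (n : ℝ) + 1) (by positivity)
  rw [R1_natCast (Nat.succ_pos n), R1_natCast (Nat.succ_pos (n + 1))]
  convert h using 2
  · push_cast [harmonic_succ]
    field_simp
    ring
  · push_cast
    field_simp

lemma abs_R1_le_of_lt_one {u : ℝ} (hu : 0 < u) (hu1 : u < 1) : |R1 u| ≤ 5 / u ^ 2 := by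
  have hR : R1 u = log u + eulerMascheroniConstant - 1 + (1 / 2) * u⁻¹ := by
    rw [R1_eq_R1Piece (m := 0) hu ⟨by simpa using hu.le, by simpa using hu1.le⟩, R1Piece]
    simp [div_eq_mul_inv]
  have hinv : u⁻¹ ≤ u⁻¹ ^ 2 := by
    have : 1 ≤ u⁻¹ := one_le_inv₀ hu |>.2 hu1.le
    nlinarith
  have hupper := log_le_sub_one_of_pos hu
  have hlower := one_sub_inv_le_log_of_pos hu
  have hγ1 := one_half_lt_eulerMascheroniConstant
  have hγ2 := eulerMascheroniConstant_lt_two_thirds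
  rw [hR, abs_le, div_eq_mul_inv, ← inv_pow]
  constructor <;> nlinarith

lemma abs_R1_le {u : ℝ} (hu : 0 < u) : |R1 u| ≤ 5 / u ^ 2 := by
  rcases lt_or_ge u 1 with hu1 | hu1
  · exact abs_R1_le_of_lt_one hu hu1
  set m := ⌊u⌋₊
  have hm : 0 < m := Nat.floor_pos.2 hu1
  have hm1 : (1 : ℝ) ≤ m := by exact_mod_cast hm
  have hmu : (m : ℝ) ≤ u := Nat.floor_le hu.le
  have hum : u < m + 1 := Nat.lt_floor_add_one u
  have hcell : ∀ t ∈ Icc (m : ℝ) (m + 1), 0 < t := fun t ht => by linarith [ht.1]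
  have hderiv : ∀ t ∈ Ico (m : ℝ) (m + 1), ‖(t - (m + 1 / 2)) / t ^ 2‖ ≤ 1 / 2 / m ^ 2 := by
    intro t ht
    rw [norm_div, norm_pow, Real.norm_eq_abs, Real.norm_eq_abs,
      abs_of_pos (hcell t (Ico_subset_Icc_self ht))]
    exact div_le_div₀ (by norm_num) (abs_le.2 ⟨by linarith [ht.1], by linarith [ht.2]⟩)
      (by positivity) (pow_le_pow_left₀ (by positivity) ht.1 2)
  have hmvt := norm_image_sub_le_of_norm_deriv_le_segment'
    (fun t ht => (hasDerivAt_R1Piece m (hcell t ht)).hasDerivWithinAt) hderiv u ⟨hmu, hum.le⟩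
  rw [← R1_eq_R1Piece (by positivity) ⟨hmu, hum.le⟩,
    ← R1_eq_R1Piece (by positivity) ⟨le_rfl, by linarith⟩, Real.norm_eq_abs] at hmvt
  have hnat := abs_R1_natCast_le hm
  calc |R1 u| ≤ |R1 u - R1 m| + |R1 m| := by simpa using abs_add_le (R1 u - R1 m) (R1 m)
    _ ≤ 1 / 2 / m ^ 2 + 3 / (4 * m ^ 2) := by
        gcongr
        exact hmvt.trans (mul_le_of_le_one_right (by positivity) (by linarith))
    _ = 5 / (4 * m ^ 2) := by ring
    _ ≤ 5 / u ^ 2 := by gcongr; nlinarith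

lemma measurable_R1 : Measurable R1 := by
  have hH : Measurable H :=
    (measurable_from_nat (f := fun n : ℕ => ∑ k ∈ Finset.Icc 1 n, (1 : ℝ) / k)).comp
      Nat.measurable_floor
  unfold R1
  fun_prop

lemma integrableOn_Ioi_R1 {c : ℝ} (hc : 0 < c) : IntegrableOn R1 (Ioi c) := by
  refine Integrable.mono' ((integrableOn_Ioi_rpow_of_lt (by norm_num : (-2 : ℝ) < -1) hc).const_mul 5)
    measurable_R1.aestronglyMeasurable ((ae_restrict_iff' measurableSet_Ioi).2 ?_)
  refine Eventually.of_forall fun t ht => ?_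
  have ht0 : 0 < t := hc.trans ht
  rw [Real.norm_eq_abs, rpow_neg ht0.le, rpow_two, ← div_eq_mul_inv]
  exact abs_R1_le ht0

lemma intervalIntegrable_R1 {a b : ℝ} (ha : 0 < a) (hab : a ≤ b) :
    IntervalIntegrable R1 volume a b :=
  (intervalIntegrable_iff_integrableOn_Ioc_of_le hab).2
    ((integrableOn_Ioi_R1 ha).mono_set Ioc_subset_Ioi_self)

lemma integral_R1_of_mem_cell {m : ℕ} {a b : ℝ} (ha : 0 < a) (hma : (m : ℝ) ≤ a) (hab : a ≤ b)
    (hbm : b ≤ m + 1) : ∫ t in a..b, R1 t = V a - V b := by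
  have hcell : ∀ t ∈ uIcc a b, 0 < t ∧ t ∈ Icc (m : ℝ) (m + 1) := by
    intro t ht
    rw [uIcc_of_le hab] at ht
    exact ⟨ha.trans_le ht.1, hma.trans ht.1, ht.2.trans hbm⟩
  have hpos : ∀ t ∈ uIcc a b, 0 < t := fun t ht => (hcell t ht).1
  calc ∫ t in a..b, R1 t = ∫ t in a..b, R1Piece m t :=
        intervalIntegral.integral_congr fun t ht => R1_eq_R1Piece (hcell t ht).1 (hcell t ht).2
    _ = -VPiece m b - -VPiece m a :=
        intervalIntegral.integral_eq_sub_of_hasDerivAt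
          (fun t ht => by simpa using (hasDerivAt_VPiece m (hpos t ht)).neg)
          (ContinuousOn.intervalIntegrable fun t ht =>
            (hasDerivAt_R1Piece m (hpos t ht)).continuousAt.continuousWithinAt)
    _ = V a - V b := by
        rw [V_eq_VPiece ha ⟨hma, hab.trans hbm⟩, V_eq_VPiece (ha.trans_le hab) ⟨hma.trans hab, hbm⟩]
        ring

lemma integral_R1_eq_sub_V {x : ℝ} (hx : 0 < x) :
    ∀ N : ℕ, x ≤ N → ∫ t in x..N, R1 t = V x - V N
  | 0, h => absurd h (by simpa using hx)
  | n + 1, h => by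
    push_cast at h ⊢
    rcases le_or_gt x n with hxn | hnx
    · have hn : 0 < (n : ℝ) := hx.trans_le hxn
      rw [← intervalIntegral.integral_add_adjacent_intervals (intervalIntegrable_R1 hx hxn)
        (intervalIntegrable_R1 hn (by linarith)), integral_R1_eq_sub_V hx n hxn,
        integral_R1_of_mem_cell hn le_rfl (by linarith) le_rfl]
      ring
    · exact integral_R1_of_mem_cell hx hnx.le h le_rfl

lemma sum_log_eq_log_factorial (m : ℕ) : ∑ n ∈ Finset.Icc 1 m, log n = log m.factorial := by
  induction m with
  | zero => simp
  | succ m ih =>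
    rw [Finset.sum_Icc_succ_top (Nat.le_add_left 1 m), ih, Nat.factorial_succ, Nat.cast_mul,
      log_mul (by positivity) (by positivity), add_comm]

lemma V_natCast {N : ℕ} (hN : 0 < N) :
    V N = log (Stirling.stirlingSeq N) - log π / 2 - N * R1 N := by
  have hN0 : (N : ℝ) ≠ 0 := by positivity
  rw [V_eq_VPiece_floor, Nat.floor_natCast, VPiece, R1_natCast hN, sum_log_eq_log_factorial,
    Stirling.log_stirlingSeq_formula, log_mul two_ne_zero hN0, log_div hN0 (exp_ne_zero 1),
    log_exp, log_mul two_ne_zero pi_ne_zero]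
  field_simp
  ring

lemma tendsto_V_natCast : Tendsto (fun N : ℕ => V N) atTop (𝓝 0) := by
  have hstirling : Tendsto (fun N : ℕ => log (Stirling.stirlingSeq N)) atTop (𝓝 (log π / 2)) := by
    rw [← log_sqrt pi_pos.le]
    exact ((continuousAt_log (by positivity)).tendsto).comp Stirling.tendsto_stirlingSeq_sqrt_pi
  have hR : Tendsto (fun N : ℕ => (N : ℝ) * R1 N) atTop (𝓝 0) := by
    refine squeeze_zero_norm' ?_ (tendsto_const_div_atTop_nhds_zero_nat (3 / 4 : ℝ))
    filter_upwards [eventually_gt_atTop 0] with N hN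
    have hN0 : (0 : ℝ) < N := by exact_mod_cast hN
    rw [norm_mul, Real.norm_eq_abs, Real.norm_eq_abs, abs_of_pos hN0]
    calc (N : ℝ) * |R1 N| ≤ N * (3 / (4 * N ^ 2)) := by gcongr; exact abs_R1_natCast_le hN
      _ = 3 / 4 / N := by field_simp
  have h := (hstirling.sub_const (log π / 2)).sub hR
  rw [sub_self, sub_zero] at h
  refine h.congr' ?_
  filter_upwards [eventually_gt_atTop 0] with N hN
  rw [V_natCast hN]

lemma V_eq_integral_Ioi_R1 {x : ℝ} (hx : 0 < x) : V x = ∫ t in Ioi x, R1 t := by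
  refine tendsto_nhds_unique ?_ (intervalIntegral_tendsto_integral_Ioi x (integrableOn_Ioi_R1 hx)
    tendsto_natCast_atTop_atTop)
  have h := tendsto_V_natCast.const_sub (V x)
  rw [sub_zero] at h
  refine h.congr' ?_
  filter_upwards [eventually_ge_atTop ⌈x⌉₊] with N hN
  exact (integral_R1_eq_sub_V hx N (Nat.ceil_le.1 hN)).symm

lemma integral_Ioi_abs_R1_le {a : ℝ} (ha : 0 < a) : ∫ t in Ioi a, |R1 t| ≤ 5 / a := by
  have hint := (integrableOn_Ioi_rpow_of_lt (by norm_num : (-2 : ℝ) < -1) ha).const_mul 5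
  calc ∫ t in Ioi a, |R1 t| ≤ ∫ t in Ioi a, 5 * t ^ (-2 : ℝ) := by
        refine setIntegral_mono_on (integrableOn_Ioi_R1 ha).abs hint measurableSet_Ioi
          fun t ht => ?_
        rw [rpow_neg (ha.trans ht).le, rpow_two, ← div_eq_mul_inv]
        exact abs_R1_le (ha.trans ht)
    _ = 5 / a := by
        rw [integral_const_mul, integral_Ioi_rpow_of_lt (by norm_num) ha]
        norm_num [rpow_neg_one, div_eq_mul_inv]

lemma integral_Ioi_R1_comp_mul {c r : ℝ} (hc : 0 < c) (hr : 0 < r) :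
    ∫ t in Ioi r, R1 (c * t) = V (c * r) / c := by
  rw [integral_comp_mul_left_Ioi R1 r hc, ← V_eq_integral_Ioi_R1 (by positivity), smul_eq_mul,
    inv_mul_eq_div]

lemma integral_Ioi_abs_R1_comp_mul_le {c r : ℝ} (hc : 0 < c) (hr : 0 < r) :
    ∫ t in Ioi r, |R1 (c * t)| ≤ 5 / (c ^ 2 * r) := by
  rw [integral_comp_mul_left_Ioi (fun u => |R1 u|) r hc, smul_eq_mul]
  calc c⁻¹ * ∫ u in Ioi (c * r), |R1 u| ≤ c⁻¹ * (5 / (c * r)) := by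
        gcongr
        exact integral_Ioi_abs_R1_le (by positivity)
    _ = 5 / (c ^ 2 * r) := by field_simp

lemma integral_Ioi_S1 {r : ℝ} (hr : 0 < r) :
    ∫ t in Ioi r, S1 t = ∑' n : ℕ, V ((n + 1) * r) / (n + 1) := by
  have hc (n : ℕ) : (0 : ℝ) < n + 1 := n.cast_add_one_pos
  have hint (n : ℕ) : IntegrableOn (fun t => R1 ((n + 1) * t)) (Ioi r) :=
    (integrableOn_Ioi_comp_mul_left_iff R1 r (hc n)).2 (integrableOn_Ioi_R1 (by positivity))
  have hsum : Summable fun n : ℕ => ∫ t in Ioi r, ‖R1 ((n + 1) * t)‖ := by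
    have h := (summable_nat_add_iff 1).2 (summable_one_div_nat_pow.2 one_lt_two) |>.mul_left (5 / r)
    refine Summable.of_nonneg_of_le (fun n => integral_nonneg fun _ => norm_nonneg _)
      (fun n => ?_) h
    simp only [Real.norm_eq_abs]
    refine (integral_Ioi_abs_R1_comp_mul_le (hc n) hr).trans_eq ?_
    push_cast
    field_simp
  rw [show (∫ t in Ioi r, S1 t) = ∫ t in Ioi r, ∑' n : ℕ, R1 ((n + 1) * t) from rfl,
    ← integral_tsum_of_summable_integral_norm hint hsum]
  exact tsum_congr fun n => integral_Ioi_R1_comp_mul (hc n) hr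

/-- `V(x) = ∫_x^∞ R₁(t) dt` for every `x > 0`, and
`∫_r^∞ S₁(t) dt = ∑_{n≥1} V(nr)/n` for every `r > 0`. -/
theorem V_eq_integral_R1_and_integral_S1_eq_sum_V :
    (∀ x : ℝ, 0 < x → V x = ∫ t in Set.Ioi x, R1 t) ∧
    (∀ r : ℝ, 0 < r →
      (∫ t in Set.Ioi r, S1 t) = ∑' n : ℕ, V ((n + 1) * r) / (n + 1)) :=
  ⟨fun _ hx => V_eq_integral_Ioi_R1 hx, fun _ hr => integral_Ioi_S1 hr⟩
end

section
/- S₁(1) = (log(2π) − γ − 1)/2. -/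
/-!
On integers, `R₁(n) = -(H(n) - log n - γ - 1/(2n))`. Comparing `log (1 + 1/k)` with the
trapezoidal rule bounds the increments of this remainder by a telescoping sequence, which gives
`|H(n) - log n - γ - 1/(2n)| ≤ 3/(4n²)`; hence the series converges. Its `N`-th partial sum is
`log N! - (N + 1/2) H(N) + N(1 + γ)`, whose limit Stirling's formula
`N! ~ √(2πN) (N/e)^N` evaluates.
-/

open Real MeasureTheory Filter Topology

open Finset

theorem dist_le_of_dist_succ_le {α : Type*} [PseudoMetricSpace α] {a : ℕ → α} {u : ℕ → ℝ}
    {L : α} {N : ℕ} (ha : Tendsto a atTop (𝓝 L)) (hu : Tendsto u atTop (𝓝 0))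
    (h : ∀ k ≥ N, dist (a k) (a (k + 1)) ≤ u k - u (k + 1)) : dist (a N) L ≤ u N := by
  have hpartial : ∀ M ≥ N, dist (a N) (a M) ≤ u N - u M := by
    refine Nat.le_induction (by simp) fun M hM ih => ?_
    linarith [dist_triangle (a N) (a M) (a (M + 1)), h M hM]
  simpa using le_of_tendsto_of_tendsto (tendsto_const_nhds.dist ha) (tendsto_const_nhds.sub hu)
    ((eventually_ge_atTop N).mono hpartial)

-- `log (1 + 1/x) = -log (1 - y)` with `y = 1/(x+1)`: compare with the Taylor polynomial `y + y²/2`,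
-- which differs from the trapezoidal sum by exactly `-1/(2x(x+1)²)`.
theorem abs_log_one_add_inv_sub_le {x : ℝ} (hx : 0 < x) :
    |log (1 + x⁻¹) - (1 / (2 * x) + 1 / (2 * (x + 1)))| ≤ 3 / (2 * x * (x + 1) ^ 2) := by
  obtain ⟨y, hy⟩ : ∃ y : ℝ, y = 1 / (x + 1) := ⟨_, rfl⟩
  have hy0 : 0 < y := by rw [hy]; positivity
  have h1y : 1 - y = x / (x + 1) := by rw [hy]; field_simp; ring
  have hy1 : |y| < 1 := by
    rw [abs_of_pos hy0]; linarith [show 0 < x / (x + 1) by positivity]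
  have htaylor := abs_log_sub_add_sum_range_le hy1 2
  have hsum : ∑ i ∈ range 2, y ^ (i + 1) / (i + 1) = y + y ^ 2 / 2 := by
    simp [sum_range_succ]; ring
  have hlog : log (1 - y) = -log (1 + x⁻¹) := by
    rw [h1y, ← log_inv]; congr 1; field_simp
  have hrem : y ^ (2 + 1) / (1 - y) = 1 / (x * (x + 1) ^ 2) := by
    rw [h1y, hy, one_div_pow]; field_simp
  have htrap : y + y ^ 2 / 2 - (1 / (2 * x) + 1 / (2 * (x + 1))) =
      -(1 / (2 * x * (x + 1) ^ 2)) := by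
    rw [hy]; field_simp; ring
  rw [abs_of_pos hy0, hsum, hlog, hrem, abs_le] at htaylor
  have hsplit : 1 / (x * (x + 1) ^ 2) + 1 / (2 * x * (x + 1) ^ 2) = 3 / (2 * x * (x + 1) ^ 2) := by
    field_simp; ring
  have hpos : 0 < 1 / (2 * x * (x + 1) ^ 2) := by positivity
  rw [← hsplit, abs_le]
  constructor <;> linarith [htaylor.1, htaylor.2]

noncomputable def harmonicRemainder (n : ℕ) : ℝ :=
  harmonic n - log n - eulerMascheroniConstant - 1 / (2 * n)

theorem tendsto_harmonicRemainder : Tendsto harmonicRemainder atTop (𝓝 0) := by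
  have h := (tendsto_harmonic_sub_log.sub_const eulerMascheroniConstant).sub
    ((tendsto_one_div_atTop_nhds_zero_nat (𝕜 := ℝ)).div_const 2)
  rw [sub_self, zero_div, sub_zero] at h
  refine h.congr fun n => ?_
  rw [harmonicRemainder, div_div, mul_comm]

theorem harmonicRemainder_sub_succ {n : ℕ} (hn : n ≠ 0) :
    harmonicRemainder n - harmonicRemainder (n + 1) =
      log (1 + (n : ℝ)⁻¹) - (1 / (2 * n) + 1 / (2 * (n + 1))) := by
  have hn' : (n : ℝ) ≠ 0 := Nat.cast_ne_zero.mpr hn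
  rw [show (1 : ℝ) + (n : ℝ)⁻¹ = (n + 1) / n by field_simp, log_div (by positivity) hn']
  simp only [harmonicRemainder, harmonic_succ]
  push_cast
  field_simp
  ring

theorem abs_harmonicRemainder_le {n : ℕ} (hn : n ≠ 0) :
    |harmonicRemainder n| ≤ 3 / (4 * n ^ 2) := by
  have hu : Tendsto (fun k : ℕ => 3 / (4 * (k : ℝ) ^ 2)) atTop (𝓝 0) :=
    tendsto_const_nhds.div_atTop <| Tendsto.const_mul_atTop (by norm_num) <|
      (tendsto_pow_atTop two_ne_zero).comp tendsto_natCast_atTop_atTop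
  -- `3 / (2k(k+1)²)`, the trapezoidal error bound, is at most this telescoping difference.
  have hstep : ∀ k ≥ n, dist (harmonicRemainder k) (harmonicRemainder (k + 1)) ≤
      3 / (4 * (k : ℝ) ^ 2) - 3 / (4 * ((k + 1 : ℕ) : ℝ) ^ 2) := by
    intro k hk
    have hk0 : 0 < k := (Nat.pos_of_ne_zero hn).trans_le hk
    rw [Real.dist_eq, harmonicRemainder_sub_succ hk0.ne']
    refine (abs_log_one_add_inv_sub_le (Nat.cast_pos.mpr hk0)).trans ?_
    push_cast
    rw [div_sub_div _ _ (by positivity) (by positivity),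
      div_le_div_iff₀ (by positivity) (by positivity)]
    nlinarith [show 0 ≤ (k : ℝ) * (k + 1) ^ 2 by positivity]
  simpa using dist_le_of_dist_succ_le tendsto_harmonicRemainder hu hstep

theorem summable_harmonicRemainder : Summable harmonicRemainder := by
  refine Summable.of_norm_bounded_eventually
    ((summable_one_div_nat_pow.mpr one_lt_two).mul_left (3 / 4)) ?_
  filter_upwards [Nat.cofinite_eq_atTop ▸ eventually_ne_atTop 0] with n hn
  have hn' : (n : ℝ) ≠ 0 := Nat.cast_ne_zero.mpr hn
  rw [Real.norm_eq_abs]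
  convert abs_harmonicRemainder_le hn using 1
  field_simp

theorem tendsto_mul_harmonicRemainder :
    Tendsto (fun n : ℕ => n * harmonicRemainder n) atTop (𝓝 0) := by
  refine squeeze_zero_norm' ?_ (tendsto_const_div_atTop_nhds_zero_nat (3 / 4 : ℝ))
  filter_upwards [eventually_ne_atTop 0] with n hn
  have hn' : (0 : ℝ) < n := by positivity
  calc ‖(n : ℝ) * harmonicRemainder n‖ = n * |harmonicRemainder n| := by
        rw [norm_mul, Real.norm_natCast, Real.norm_eq_abs]
    _ ≤ n * (3 / (4 * n ^ 2)) := by gcongr; exact abs_harmonicRemainder_le hn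
    _ = 3 / 4 / n := by field_simp

theorem sum_range_harmonicRemainder_succ (N : ℕ) :
    ∑ n ∈ range N, harmonicRemainder (n + 1) =
      (N + 1 / 2) * harmonic N - N * (1 + eulerMascheroniConstant) - log N.factorial := by
  induction N with
  | zero => simp
  | succ N ih =>
    rw [sum_range_succ, ih, harmonicRemainder, harmonic_succ, Nat.factorial_succ]
    push_cast
    rw [log_mul (by positivity) (by positivity)]
    field_simp
    ring

theorem sum_range_harmonicRemainder_succ_eq {N : ℕ} (hN : N ≠ 0) :
    ∑ n ∈ range N, harmonicRemainder (n + 1) =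
      N * harmonicRemainder N + harmonicRemainder N / 2 + 1 / (4 * N) +
        (1 + eulerMascheroniConstant) / 2 - log (Stirling.stirlingSeq N) - log 2 / 2 := by
  have hN' : (N : ℝ) ≠ 0 := Nat.cast_ne_zero.mpr hN
  rw [sum_range_harmonicRemainder_succ, Stirling.log_stirlingSeq_formula,
    log_mul two_ne_zero hN', log_div hN' (exp_ne_zero 1), log_exp, harmonicRemainder]
  field_simp
  ring

theorem hasSum_harmonicRemainder_succ :
    HasSum (fun n : ℕ => harmonicRemainder (n + 1))
      ((1 + eulerMascheroniConstant - log (2 * π)) / 2) := by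
  rw [((summable_nat_add_iff 1).mpr summable_harmonicRemainder).hasSum_iff_tendsto_nat]
  have hquarter : Tendsto (fun N : ℕ => 1 / (4 * (N : ℝ))) atTop (𝓝 0) :=
    (tendsto_const_div_atTop_nhds_zero_nat (1 / 4 : ℝ)).congr fun N => div_div _ _ _
  have hlim := ((((tendsto_mul_harmonicRemainder.add (tendsto_harmonicRemainder.div_const 2)).add
    hquarter).add_const ((1 + eulerMascheroniConstant) / 2)).sub
    (Stirling.tendsto_stirlingSeq_sqrt_pi.log (by positivity))).sub_const (log 2 / 2)
  convert hlim.congr' ((eventually_ne_atTop 0).mono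
    fun N hN => (sum_range_harmonicRemainder_succ_eq hN).symm) using 2
  rw [log_sqrt pi_pos.le, log_mul two_ne_zero pi_ne_zero]
  ring

-- Also at `n = 0`, where both sides are `γ` because `log 0 = 0` and `x / 0 = 0`.
theorem R1_natCast_s17 (n : ℕ) : R1 n = -harmonicRemainder n := by
  simp only [R1, H, harmonicRemainder, Nat.floor_natCast, Int.fract_natCast,
    harmonic_eq_sum_Icc, one_div]
  push_cast
  ring

/-- `S₁(1) = (log 2π − γ − 1)/2`. -/
theorem S1_one :
    S1 1 = (Real.log (2 * Real.pi) - Real.eulerMascheroniConstant - 1) / 2 := by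
  have hterm (k : ℕ) : R1 ((k + 1) * 1) = -harmonicRemainder (k + 1) := by
    rw [mul_one, ← R1_natCast_s17]; push_cast; rfl
  rw [S1, tsum_congr hterm, tsum_neg, hasSum_harmonicRemainder_succ.tsum_eq]
  ring
end

section
/- For every real x ≥ 1, (1 − γ)·L₀(x) − M₀(x)/(2x) = L₀(x)·log x − (L₁(x) + 1) − Φ₁(x)/x + 1/x, where L₀(x) = ∑_{n≤x} μ(n)/n, L₁(x) = ∑_{n≤x} μ(n)·(log n)/n, M₀(x) = ∑_{n≤x} μ(n), and Φ₁(x) = ∑_{n≤x} μ(n)·(x/n)·R₁(x/n). -/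
open Real MeasureTheory Filter Topology

open Finset ArithmeticFunction
open scoped ArithmeticFunction.Moebius ArithmeticFunction.zeta

namespace ArithmeticFunction

theorem pdiv_id_mul_pdiv_id {K : Type*} [Semifield K] (f g : ArithmeticFunction K) :
    f.pdiv (ArithmeticFunction.id : ArithmeticFunction ℕ)
        * g.pdiv (ArithmeticFunction.id : ArithmeticFunction ℕ) =
      (f * g).pdiv (ArithmeticFunction.id : ArithmeticFunction ℕ) := by
  ext m
  simp only [mul_apply, pdiv_apply, natCoe_apply, id_apply, sum_div]
  refine sum_congr rfl fun p hp => ?_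
  rw [← (Nat.mem_divisorsAntidiagonal.mp hp).1, Nat.cast_mul, div_mul_div_comm]

theorem one_pdiv_id {K : Type*} [DivisionSemiring K] :
    (1 : ArithmeticFunction K).pdiv (ArithmeticFunction.id : ArithmeticFunction ℕ) = 1 := by
  ext n
  by_cases hn : n = 1 <;> simp [pdiv_apply, hn]

theorem sum_Ioc_one_apply {R : Type*} [AddCommMonoidWithOne R] {N : ℕ} (hN : 1 ≤ N) :
    ∑ n ∈ Ioc 0 N, (1 : ArithmeticFunction R) n = 1 := by
  simp [one_apply, hN]

end ArithmeticFunction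

theorem sum_moebius_mul_floor_div {x : ℝ} (hx : 1 ≤ x) :
    ∑ n ∈ Icc 1 ⌊x⌋₊, (μ n : ℝ) * ⌊x / n⌋₊ = 1 := by
  have h := sum_Ioc_mul_zeta_eq_sum (μ : ArithmeticFunction ℝ) ⌊x⌋₊
  rw [coe_moebius_mul_coe_zeta, sum_Ioc_one_apply (Nat.one_le_floor_iff _ |>.mpr hx),
    ← Icc_add_one_left_eq_Ioc, zero_add] at h
  simpa only [Nat.floor_div_natCast, intCoe_apply] using h.symm

theorem sum_moebius_div_mul_H {x : ℝ} (hx : 1 ≤ x) :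
    ∑ n ∈ Icc 1 ⌊x⌋₊, (μ n : ℝ) / n * H (x / n) = 1 := by
  have h := sum_Ioc_mul_eq_sum_sum
    ((μ : ArithmeticFunction ℝ).pdiv (ArithmeticFunction.id : ArithmeticFunction ℕ))
    ((ζ : ArithmeticFunction ℝ).pdiv (ArithmeticFunction.id : ArithmeticFunction ℕ)) ⌊x⌋₊
  rw [pdiv_id_mul_pdiv_id, coe_moebius_mul_coe_zeta, one_pdiv_id,
    sum_Ioc_one_apply (Nat.one_le_floor_iff _ |>.mpr hx)] at h
  simp only [← Icc_add_one_left_eq_Ioc, zero_add] at h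
  convert h.symm using 1
  refine sum_congr rfl fun n _ => ?_
  rw [H, Nat.floor_div_natCast, pdiv_apply]
  congr 1
  refine sum_congr rfl fun k hk => ?_
  simp [pdiv_apply, Nat.one_le_iff_ne_zero.mp (mem_Icc.mp hk).1]

theorem mul_R1 {y : ℝ} (hy : 0 < y) :
    y * R1 y = y * (log y + eulerMascheroniConstant) - y * H y - y + ⌊y⌋₊ + 1 / 2 := by
  rw [R1, Int.fract, ← natCast_floor_eq_intCast_floor hy.le]
  field_simp
  ring

/-- MacLeod-type identity: for `x ≥ 1`,
`(1 − γ)L₀(x) − M₀(x)/(2x) = L₀(x) log x − (L₁(x) + 1) − Φ₁(x)/x + 1/x`, where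
`L₀(x) = ∑_{n≤x} μ(n)/n`, `L₁(x) = ∑_{n≤x} μ(n) log n / n`, `M₀(x) = ∑_{n≤x} μ(n)`,
and `Φ₁(x) = ∑_{n≤x} μ(n)(x/n)R₁(x/n)`. -/
theorem macleod_identity_one (x : ℝ) (hx : 1 ≤ x) :
    (1 - Real.eulerMascheroniConstant)
        * (∑ n ∈ Finset.Icc 1 ⌊x⌋₊, (ArithmeticFunction.moebius n : ℝ) / n)
      - (∑ n ∈ Finset.Icc 1 ⌊x⌋₊, (ArithmeticFunction.moebius n : ℝ)) / (2 * x) =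
    (∑ n ∈ Finset.Icc 1 ⌊x⌋₊, (ArithmeticFunction.moebius n : ℝ) / n) * Real.log x
      - ((∑ n ∈ Finset.Icc 1 ⌊x⌋₊, (ArithmeticFunction.moebius n : ℝ) * Real.log n / n) + 1)
      - (∑ n ∈ Finset.Icc 1 ⌊x⌋₊,
          (ArithmeticFunction.moebius n : ℝ) * (x / n) * R1 (x / n)) / x
      + 1 / x := by
  have hx0 : 0 < x := one_pos.trans_le hx
  have hterm : ∀ n ∈ Icc 1 ⌊x⌋₊, (μ n : ℝ) * (x / n) * R1 (x / n) =
      x * (Real.log x + eulerMascheroniConstant) * (μ n / n) - x * (μ n * Real.log n / n)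
        - x * (μ n / n * H (x / n)) - x * (μ n / n) + μ n * ⌊x / n⌋₊ + μ n / 2 := by
    intro n hn
    have hn0 : (0 : ℝ) < n := by exact_mod_cast (mem_Icc.mp hn).1
    rw [mul_assoc, mul_R1 (div_pos hx0 hn0), log_div hx0.ne' hn0.ne']
    field_simp
    ring
  rw [sum_congr rfl hterm]
  simp only [sum_add_distrib, sum_sub_distrib, ← mul_sum, ← sum_div]
  rw [sum_moebius_div_mul_H hx, sum_moebius_mul_floor_div hx]
  field_simp
  ring
end
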